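/- Let Λ be a partially ordered set as in the context and let U be a unique rectification target. Then U is the only tableau of straight shape in its jeu de taquin class [U], i.e. every increasing tableau of straight shape that is jeu de taquin equivalent to U is equal to U. -/

import Mathlib

open Classical

noncomputable section

/-- A straight shape in a poset: a finite lower order ideal, given as a `Finset`. -/
def StraightShape {L : Type} [PartialOrder L] (lam : Finset L) : Prop :=
  ∀ a ∈ lam, ∀ b : L, b ≤ a → b ∈ lam

/-- The shape (set of boxes) of a partially defined tableau. -/
def shapeOf {L : Type} {V : Type} (T : L → Option V) : Set L := {α | T α ≠ none}

/-- `lam ⊆ nu` is a pair of straight shapes, defining the skew shape `nu / lam`. -/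
def IsSkewPair {L : Type} [PartialOrder L] (lam nu : Finset L) : Prop :=
  StraightShape lam ∧ StraightShape nu ∧ lam ⊆ nu

/-- `T` is defined on a skew shape `nu / lam`. -/
def HasSkewShape {L : Type} [PartialOrder L] (T : L → Option ℤ) : Prop :=
  ∃ lam nu : Finset L, IsSkewPair lam nu ∧ shapeOf T = (nu : Set L) \ (lam : Set L)

/-- `T` is strictly increasing along the partial order. -/
def Increasing {L : Type} [PartialOrder L] (T : L → Option ℤ) : Prop :=
  ∀ a b : L, a < b → ∀ x y : ℤ, T a = some x → T b = some y → x < y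

/-- An increasing tableau of skew shape. -/
def IncreasingSkewTableau {L : Type} [PartialOrder L] (T : L → Option ℤ) : Prop :=
  HasSkewShape T ∧ Increasing T

/-- Two boxes are neighbors if one covers the other. -/
def Neighbor {L : Type} [PartialOrder L] (a b : L) : Prop := a ⋖ b ∨ b ⋖ a

/-- The swap operation `swap_{s,s'}`. -/
def swapVal {L : Type} [PartialOrder L] {V : Type} (s s' : V) (T : L → Option V) :
    L → Option V := fun α =>
  if T α = some s ∧ ∃ β, Neighbor α β ∧ T β = some s' then some s'
  else if T α = some s' ∧ ∃ β, Neighbor α β ∧ T β = some s then some s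
  else T α

/-- Integer values extended with a dot `•`. -/
abbrev ZDot : Type := ℤ ⊕ Unit

def toDotted {L : Type} (T : L → Option ℤ) : L → Option ZDot := fun α => (T α).map Sum.inl

/-- Place a dot in every box of `C`. -/
def addDots {L : Type} (C : Finset L) (T : L → Option ZDot) : L → Option ZDot := fun α =>
  if α ∈ C then some (Sum.inr ()) else T α

/-- Restrict a dotted tableau to its integer-valued boxes. -/
def restrictInt {L : Type} (T : L → Option ZDot) : L → Option ℤ := fun α =>
  (T α).bind (Sum.elim some fun _ => none)

/-- Apply `swap_{a,•}, swap_{a+1,•}, …, swap_{a+n-1,•}` in this (increasing) order. -/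
def swapUp {L : Type} [PartialOrder L] (a : ℤ) : ℕ → (L → Option ZDot) → (L → Option ZDot)
  | 0, T => T
  | n + 1, T => swapVal (Sum.inl (a + n)) (Sum.inr ()) (swapUp a n T)

/-- Apply `swap_{b,•}, swap_{b-1,•}, …, swap_{b-n+1,•}` in this (decreasing) order. -/
def swapDown {L : Type} [PartialOrder L] (b : ℤ) : ℕ → (L → Option ZDot) → (L → Option ZDot)
  | 0, T => T
  | n + 1, T => swapVal (Sum.inl (b - n)) (Sum.inr ()) (swapDown b n T)

/-- All values of `T` lie in the interval `[a, b]`. -/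
def ValuesIn {L : Type} (T : L → Option ℤ) (a b : ℤ) : Prop :=
  ∀ (α : L) (x : ℤ), T α = some x → a ≤ x ∧ x ≤ b

/-- `T'` is obtained from `T` by a single forward jeu de taquin slide `jdt_C`,
starting from a set `C` of maximal boxes of the inner shape. -/
def IsForwardSlide {L : Type} [PartialOrder L] (T T' : L → Option ℤ) : Prop :=
  ∃ (lam nu C : Finset L) (a b : ℤ),
    IsSkewPair lam nu ∧ shapeOf T = (nu : Set L) \ (lam : Set L) ∧ ValuesIn T a b ∧
    (∀ c ∈ C, c ∈ lam ∧ ∀ d ∈ lam, ¬ c < d) ∧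
    T' = restrictInt (swapUp a (b - a + 1).toNat (addDots C (toDotted T)))

/-- `T'` is obtained from `T` by a single reverse jeu de taquin slide,
starting from a set `C` of minimal boxes of the complement of the outer shape. -/
def IsReverseSlide {L : Type} [PartialOrder L] (T T' : L → Option ℤ) : Prop :=
  ∃ (lam nu C : Finset L) (a b : ℤ),
    IsSkewPair lam nu ∧ shapeOf T = (nu : Set L) \ (lam : Set L) ∧ ValuesIn T a b ∧
    (∀ c ∈ C, c ∉ nu ∧ ∀ d : L, d ∉ nu → ¬ d < c) ∧
    T' = restrictInt (swapDown b (b - a + 1).toNat (addDots C (toDotted T)))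

/-- Jeu de taquin equivalence: a finite sequence of forward and reverse slides. -/
def JdtEquiv {L : Type} [PartialOrder L] (T T' : L → Option ℤ) : Prop :=
  Relation.ReflTransGen (fun A B => IsForwardSlide A B ∨ IsReverseSlide A B) T T'

/-- `T` is defined on a straight shape. -/
def HasStraightShape {L : Type} [PartialOrder L] (T : L → Option ℤ) : Prop :=
  ∃ lam : Finset L, StraightShape lam ∧ shapeOf T = (lam : Set L)

/-- `U` is a rectification of `T`: a straight-shape tableau obtained by forward slides. -/
def RectifiesTo {L : Type} [PartialOrder L] (T U : L → Option ℤ) : Prop :=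
  Relation.ReflTransGen IsForwardSlide T U ∧ HasStraightShape U

/-- Unique rectification target. -/
def IsURT {L : Type} [PartialOrder L] (U : L → Option ℤ) : Prop :=
  HasStraightShape U ∧ Increasing U ∧
    ∀ T : L → Option ℤ, IncreasingSkewTableau T → RectifiesTo T U →
      ∀ U' : L → Option ℤ, RectifiesTo T U' → U' = U

/-- The minimal increasing tableau of a shape `θ`: each box `α` receives the maximal
cardinality of a totally ordered subset of `θ` having `α` as its maximal element. -/
def minTab {L : Type} [PartialOrder L] (θ : Finset L) : L → Option ℤ := fun α =>
  if α ∈ θ then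
    some ((sSup {n : ℕ | ∃ s : Finset L, (s : Set L) ⊆ (θ : Set L) ∧
      (∀ a ∈ s, ∀ b ∈ s, a ≤ b ∨ b ≤ a) ∧ α ∈ s ∧ (∀ a ∈ s, a ≤ α) ∧ s.card = n} : ℕ) : ℤ)
  else none

/-- A unique rectification poset. -/
def IsURP (L : Type) [PartialOrder L] : Prop :=
  ∀ lam : Finset L, StraightShape lam → IsURT (minTab lam)

/-- The structure constant `c^ν_{λ,μ}`: the number of increasing tableaux of
shape `ν/λ` that have the minimal increasing tableau `M_μ` as a rectification. -/
def ccoef {L : Type} [PartialOrder L] (lam mu nu : Finset L) : ℕ :=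
  Set.ncard {T : L → Option ℤ | Increasing T ∧ shapeOf T = (nu : Set L) \ (lam : Set L) ∧
    RectifiesTo T (minTab mu)}

/-!
Along a chain of slides starting at a unique rectification target `U`, every tableau rectifies
to `U`. After a forward slide `Y → Z`, any rectification of `Z` is also one of `Y`, hence is `U`
(and `Z` has one, since sliding into all maximal inner boxes shrinks the inner shape). After a
reverse slide `Y → Z`, the forward slide into the boxes where the dots ended up takes `Z` back
to `Y`, because each swap of the sweep is an involution at the stage where it is applied. A
straight tableau is its own rectification, so a straight `T` in the class of `U` equals `U`.

Both slide facts follow the dots through the sweep: once all values below `v` have been swapped,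
every filled box above a dot holds a value `≥ v` and every filled box below it a value `< v`.
-/

open OrderDual

section Development

variable {L : Type}

abbrev dot : ZDot := Sum.inr ()

section Order

variable [PartialOrder L]

theorem neighbor_ofDual_iff {α β : Lᵒᵈ} :
    Neighbor (ofDual α) (ofDual β) ↔ Neighbor α β := by
  simp only [Neighbor, ofDual_covBy_ofDual_iff, or_comm]

theorem exists_covBy_le_of_lt_of_finite {α β : L} (hfin : (Set.Icc α β).Finite) (h : α < β) :
    ∃ γ, α ⋖ γ ∧ γ ≤ β := by
  obtain ⟨γ, hγ⟩ := (hfin.subset fun δ hδ => ⟨hδ.1.le, hδ.2⟩ :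
    {δ | α < δ ∧ δ ≤ β}.Finite).exists_minimal ⟨β, h, le_rfl⟩
  exact ⟨γ, ⟨hγ.prop.1, fun δ hαδ hδγ => hγ.not_lt ⟨hαδ, hδγ.le.trans hγ.prop.2⟩ hδγ⟩,
    hγ.prop.2⟩

end Order

section Dots

variable {C : Finset L} {T : L → Option ℤ} {S : L → Option ZDot} {α : L}

theorem addDots_toDotted_eq_dot_iff : addDots C (toDotted T) α = some dot ↔ α ∈ C := by
  by_cases h : α ∈ C <;> simp [addDots, toDotted, h]

theorem addDots_toDotted_eq_inl_iff {x : ℤ} :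
    addDots C (toDotted T) α = some (Sum.inl x) ↔ α ∉ C ∧ T α = some x := by
  by_cases h : α ∈ C <;> simp [addDots, toDotted, h]

theorem shapeOf_addDots_toDotted : shapeOf (addDots C (toDotted T)) = shapeOf T ∪ C := by
  ext α; by_cases h : α ∈ C <;> simp [shapeOf, addDots, toDotted, h]

theorem restrictInt_eq_some_iff {x : ℤ} : restrictInt S α = some x ↔ S α = some (Sum.inl x) := by
  rcases h : S α with _ | (y | u) <;> simp [restrictInt, h]

theorem shapeOf_restrictInt : shapeOf (restrictInt S) = shapeOf S \ {α | S α = some dot} := by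
  ext α; rcases h : S α with _ | (y | u) <;> simp [shapeOf, restrictInt, h]

theorem restrictInt_addDots_toDotted (h : ∀ c ∈ C, T c = none) :
    restrictInt (addDots C (toDotted T)) = T := by
  funext α; by_cases hα : α ∈ C <;> cases hT : T α <;> simp_all [restrictInt, addDots, toDotted]

theorem addDots_toDotted_restrictInt (h : ∀ α, α ∈ C ↔ S α = some dot) :
    addDots C (toDotted (restrictInt S)) = S := by
  funext α; rcases hS : S α with _ | (y | u) <;> simp_all [restrictInt, addDots, toDotted]

theorem valuesIn_restrictInt_of_range_subset {S₀ : L → Option ZDot} {a b : ℤ}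
    (h : Set.range S ⊆ Set.range S₀) (h₀ : ValuesIn (restrictInt S₀) a b) :
    ValuesIn (restrictInt S) a b := by
  intro α x hx
  obtain ⟨β, hβ⟩ := h ⟨α, restrictInt_eq_some_iff.mp hx⟩
  exact h₀ β x (restrictInt_eq_some_iff.mpr hβ)

theorem valuesIn_restrictInt_addDots_toDotted {a b : ℤ} (h : ValuesIn T a b) :
    ValuesIn (restrictInt (addDots C (toDotted T))) a b := fun α x hx =>
  h α x (addDots_toDotted_eq_inl_iff.mp (restrictInt_eq_some_iff.mp hx)).2

theorem exists_finset_eq_dot (h : (shapeOf S).Finite) :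
    ∃ D : Finset L, ∀ α, α ∈ D ↔ S α = some dot :=
  ⟨(h.subset (t := {α | S α = some dot}) fun α hα => by simp_all [shapeOf]).toFinset,
    fun α => by simp⟩

theorem exists_valuesIn {nu : Finset L} (h : shapeOf T ⊆ nu) : ∃ a b, ValuesIn T a b := by
  obtain ⟨a, ha⟩ := (nu.image fun α => (T α).getD 0).bddBelow
  obtain ⟨b, hb⟩ := (nu.image fun α => (T α).getD 0).bddAbove
  refine ⟨a, b, fun α x hx => ?_⟩
  have hx_mem : x ∈ nu.image fun α => (T α).getD 0 :=
    Finset.mem_image.mpr ⟨α, h (by simp [shapeOf, hx]), by simp [hx]⟩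
  exact ⟨ha hx_mem, hb hx_mem⟩

/-- Reverse slides are studied as forward slides of this tableau on the dual poset. -/
def negDual (S : L → Option ZDot) : Lᵒᵈ → Option ZDot :=
  fun α => (S (ofDual α)).map (Sum.map Neg.neg id)

theorem negDual_injective : Function.Injective (negDual (L := L)) := by
  intro S S' h
  funext α
  exact Option.map_injective (Sum.map_injective.mpr ⟨neg_injective, fun _ _ h => h⟩)
    (congrFun h (toDual α))

@[simp] theorem negDual_eq_none_iff {α : Lᵒᵈ} :
    negDual S α = none ↔ S (ofDual α) = none := Option.map_eq_none_iff

@[simp] theorem negDual_eq_dot_iff {α : Lᵒᵈ} :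
    negDual S α = some dot ↔ S (ofDual α) = some dot := by
  rcases h : S (ofDual α) with _ | (x | u) <;> simp [negDual, h]

@[simp] theorem negDual_eq_inl_iff {α : Lᵒᵈ} {x : ℤ} :
    negDual S α = some (Sum.inl x) ↔ S (ofDual α) = some (Sum.inl (-x)) := by
  rcases h : S (ofDual α) with _ | (y | u) <;> simp [negDual, h, neg_eq_iff_eq_neg]

theorem shapeOf_negDual (S : L → Option ZDot) :
    shapeOf (negDual S) = ofDual ⁻¹' shapeOf S := by
  ext α; exact not_congr negDual_eq_none_iff

end Dots

section Swap

variable [PartialOrder L]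

section Values

variable {V : Type} {s s' t : V} {S : L → Option V} {α : L}

theorem swapVal_eq_none_iff : swapVal s s' S α = none ↔ S α = none := by
  unfold swapVal; split_ifs with h1 h2 <;> simp_all

theorem shapeOf_swapVal : shapeOf (swapVal s s' S) = shapeOf S := by
  ext α; exact not_congr swapVal_eq_none_iff

theorem swapVal_apply_of_ne_of_ne (h : S α ≠ some s) (h' : S α ≠ some s') :
    swapVal s s' S α = S α := by
  unfold swapVal; simp [h, h']

theorem swapVal_apply_left (h : S α = some s) (hβ : ∃ β, Neighbor α β ∧ S β = some s') :
    swapVal s s' S α = some s' := by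
  unfold swapVal; simp [h, hβ]

theorem swapVal_apply_right (hss : s ≠ s') (h : S α = some s')
    (hβ : ∃ β, Neighbor α β ∧ S β = some s) : swapVal s s' S α = some s := by
  unfold swapVal; simp [h, hβ, hss.symm]

theorem swapVal_apply_left_of_isolated (h : S α = some s)
    (hβ : ¬∃ β, Neighbor α β ∧ S β = some s') : swapVal s s' S α = some s := by
  unfold swapVal; split_ifs with h1 h2 <;> grind

theorem swapVal_apply_right_of_isolated (hss : s ≠ s') (h : S α = some s')
    (hβ : ¬∃ β, Neighbor α β ∧ S β = some s) : swapVal s s' S α = some s' := by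
  unfold swapVal; simp [h, hβ, hss.symm]

theorem swapVal_eq_some_left (hss : s ≠ s') (h : swapVal s s' S α = some s) :
    (S α = some s ∧ ¬∃ β, Neighbor α β ∧ S β = some s') ∨
      (S α = some s' ∧ ∃ β, Neighbor α β ∧ S β = some s) := by
  unfold swapVal at h; split_ifs at h with h1 h2 <;> grind

theorem swapVal_eq_some_right (hss : s ≠ s') (h : swapVal s s' S α = some s') :
    (S α = some s' ∧ ¬∃ β, Neighbor α β ∧ S β = some s) ∨
      (S α = some s ∧ ∃ β, Neighbor α β ∧ S β = some s') := by
  unfold swapVal at h; split_ifs at h with h1 h2 <;> grind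

theorem swapVal_eq_some_of_ne_of_ne (h : swapVal s s' S α = some t) (ht : t ≠ s)
    (ht' : t ≠ s') : S α = some t := by
  unfold swapVal at h; split_ifs at h <;> grind

theorem range_swapVal_subset : Set.range (swapVal s s' S) ⊆ Set.range S := by
  rintro _ ⟨α, rfl⟩
  unfold swapVal; split_ifs with h1 h2
  exacts [⟨_, h1.2.choose_spec.2⟩, ⟨_, h2.2.choose_spec.2⟩, ⟨α, rfl⟩]

theorem swapVal_swapVal (hss : s ≠ s')
    (hs : ∀ α β : L, Neighbor α β → S α = some s → S β ≠ some s)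
    (hs' : ∀ α β : L, Neighbor α β → S α = some s' → S β ≠ some s') :
    swapVal s s' (swapVal s s' S) = S := by
  funext α
  by_cases hα : S α = some s
  · by_cases hβ : ∃ β, Neighbor α β ∧ S β = some s'
    · obtain ⟨β, hαβ, hβs'⟩ := hβ
      have hβs : swapVal s s' S β = some s := swapVal_apply_right hss hβs' ⟨α, hαβ.symm, hα⟩
      rw [swapVal_apply_right hss (swapVal_apply_left hα ⟨β, hαβ, hβs'⟩) ⟨β, hαβ, hβs⟩, hα]
    · refine (swapVal_apply_left_of_isolated
        (swapVal_apply_left_of_isolated hα hβ) ?_).trans hα.symm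
      rintro ⟨β, hαβ, hβ'⟩
      rcases swapVal_eq_some_right hss hβ' with ⟨hβs', -⟩ | ⟨hβs, -⟩
      exacts [hβ ⟨β, hαβ, hβs'⟩, hs α β hαβ hα hβs]
  by_cases hα' : S α = some s'
  · by_cases hβ : ∃ β, Neighbor α β ∧ S β = some s
    · obtain ⟨β, hαβ, hβs⟩ := hβ
      have hβs' : swapVal s s' S β = some s' := swapVal_apply_left hβs ⟨α, hαβ.symm, hα'⟩
      rw [swapVal_apply_left (swapVal_apply_right hss hα' ⟨β, hαβ, hβs⟩) ⟨β, hαβ, hβs'⟩, hα']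
    · refine (swapVal_apply_right_of_isolated hss
        (swapVal_apply_right_of_isolated hss hα' hβ) ?_).trans hα'.symm
      rintro ⟨β, hαβ, hβ'⟩
      rcases swapVal_eq_some_left hss hβ' with ⟨hβs, -⟩ | ⟨hβs', -⟩
      exacts [hβ ⟨β, hαβ, hβs⟩, hs' α β hαβ hα' hβs']
  have hfix := swapVal_apply_of_ne_of_ne hα hα'
  rw [swapVal_apply_of_ne_of_ne (hfix ▸ hα) (hfix ▸ hα'), hfix]

theorem swapVal_map_ofDual {W : Type} {f : V → W} (hf : Function.Injective f) (s s' : V)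
    (S : L → Option V) :
    swapVal (f s) (f s') (fun α : Lᵒᵈ => (S (ofDual α)).map f) =
      fun α => (swapVal s s' S (ofDual α)).map f := by
  have hmap : ∀ (o : Option V) (v : V), o.map f = some (f v) ↔ o = some v := fun o v =>
    (Option.map_injective hf).eq_iff' rfl
  have hcond : ∀ (α : Lᵒᵈ) (v v' : V),
      ((S (ofDual α)).map f = some (f v) ∧
        ∃ β : Lᵒᵈ, Neighbor α β ∧ (S (ofDual β)).map f = some (f v')) ↔
      (S (ofDual α) = some v ∧ ∃ β, Neighbor (ofDual α) β ∧ S β = some v') := fun α v v' =>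
    and_congr (hmap _ _)
      ⟨fun ⟨β, h, hβ⟩ => ⟨ofDual β, neighbor_ofDual_iff.mpr h, (hmap _ _).mp hβ⟩,
        fun ⟨β, h, hβ⟩ => ⟨toDual β, neighbor_ofDual_iff.mp h, (hmap _ _).mpr hβ⟩⟩
  funext α
  simp only [swapVal, hcond]
  split_ifs <;> rfl

end Values

theorem negDual_swapVal (w : ℤ) (S : L → Option ZDot) :
    negDual (swapVal (Sum.inl w) dot S) = swapVal (Sum.inl (-w)) dot (negDual S) :=
  (swapVal_map_ofDual (Sum.map_injective.mpr ⟨neg_injective, fun _ _ h => h⟩) _ _ S).symm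

theorem negDual_swapDown (b : ℤ) (n : ℕ) (S : L → Option ZDot) :
    negDual (swapDown b n S) = swapUp (-b) n (negDual S) := by
  induction n with
  | zero => rfl
  | succ n ih => rw [swapDown, swapUp, negDual_swapVal, ih, neg_sub, sub_eq_neg_add]

theorem shapeOf_swapUp (a : ℤ) (n : ℕ) (S : L → Option ZDot) :
    shapeOf (swapUp a n S) = shapeOf S := by
  induction n with
  | zero => rfl
  | succ n ih => rw [swapUp, shapeOf_swapVal, ih]

theorem shapeOf_swapDown (b : ℤ) (n : ℕ) (S : L → Option ZDot) :
    shapeOf (swapDown b n S) = shapeOf S := by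
  induction n with
  | zero => rfl
  | succ n ih => rw [swapDown, shapeOf_swapVal, ih]

theorem range_swapUp_subset (a : ℤ) (n : ℕ) (S : L → Option ZDot) :
    Set.range (swapUp a n S) ⊆ Set.range S := by
  induction n with
  | zero => exact subset_rfl
  | succ n ih => exact range_swapVal_subset.trans ih

theorem range_swapDown_subset (b : ℤ) (n : ℕ) (S : L → Option ZDot) :
    Set.range (swapDown b n S) ⊆ Set.range S := by
  induction n with
  | zero => exact subset_rfl
  | succ n ih => exact range_swapVal_subset.trans ih

theorem swapUp_succ' (a : ℤ) (n : ℕ) (S : L → Option ZDot) :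
    swapUp a (n + 1) S = swapUp (a + 1) n (swapVal (Sum.inl a) dot S) := by
  induction n with
  | zero => simp [swapUp]
  | succ n ih =>
    rw [swapUp, ih, swapUp, show a + ((n + 1 : ℕ) : ℤ) = a + 1 + n by push_cast; ring]

theorem swapUp_swapDown {a b : ℤ} {n : ℕ} {S : L → Option ZDot} (hn : a + n = b + 1)
    (hinv : ∀ k < n, swapVal (Sum.inl (b - k)) dot (swapDown b (k + 1) S) = swapDown b k S) :
    swapUp a n (swapDown b n S) = S := by
  induction n generalizing a with
  | zero => rfl
  | succ n ih =>
    have ha : b - n = a := by push_cast at hn; omega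
    rw [swapUp_succ', ← ha, hinv n n.lt_succ_self]
    exact ih (by push_cast at hn ⊢; omega) fun k hk => hinv k (hk.trans n.lt_succ_self)

theorem swapVal_eq_inl {S : L → Option ZDot} {α : L} {v x : ℤ}
    (h : swapVal (Sum.inl v) dot S α = some (Sum.inl x)) :
    (S α = some (Sum.inl x) ∧ (x = v → ¬∃ β, Neighbor α β ∧ S β = some dot)) ∨
      (x = v ∧ S α = some dot ∧ ∃ β, Neighbor α β ∧ S β = some (Sum.inl v)) := by
  by_cases hx : x = v
  · subst hx
    rcases swapVal_eq_some_left (by simp) h with ⟨hα, hβ⟩ | ⟨hα, hβ⟩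
    exacts [Or.inl ⟨hα, fun _ => hβ⟩, Or.inr ⟨rfl, hα, hβ⟩]
  · exact Or.inl ⟨swapVal_eq_some_of_ne_of_ne h (by simpa) (by simp), fun h => absurd h hx⟩

theorem swapVal_apply_inl_of_ne {S : L → Option ZDot} {α : L} {v x : ℤ}
    (h : S α = some (Sum.inl x)) (hx : x ≠ v) :
    swapVal (Sum.inl v) dot S α = some (Sum.inl x) :=
  (swapVal_apply_of_ne_of_ne (by simp [h, hx]) (by simp [h])).trans h

end Swap

section Slides

variable [PartialOrder L]

/-- The state of a forward slide once the swaps of all values below `v` are done. -/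
structure SlideInvariant (v : ℤ) (S : L → Option ZDot) : Prop where
  ordConnected : (shapeOf S).OrdConnected
  finite : (shapeOf S).Finite
  lt_of_lt : ∀ ⦃α β : L⦄, α < β → ∀ ⦃x y : ℤ⦄,
    S α = some (Sum.inl x) → S β = some (Sum.inl y) → x < y
  above_dot : ∀ ⦃α β : L⦄, S α = some dot → α < β →
    S β = none ∨ ∃ y, S β = some (Sum.inl y) ∧ v ≤ y
  below_dot : ∀ ⦃α β : L⦄, S α = some dot → β < α →
    S β = none ∨ ∃ y, S β = some (Sum.inl y) ∧ y < v

namespace SlideInvariant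

variable {v : ℤ} {S : L → Option ZDot}

theorem of_eq_none_below_dot (hconn : (shapeOf S).OrdConnected) (hfin : (shapeOf S).Finite)
    (hlt : ∀ ⦃α β : L⦄, α < β → ∀ ⦃x y : ℤ⦄,
      S α = some (Sum.inl x) → S β = some (Sum.inl y) → x < y)
    (hge : ∀ α x, S α = some (Sum.inl x) → v ≤ x)
    (habove : ∀ ⦃α β : L⦄, S α = some dot → α < β → S β ≠ some dot)
    (hbelow : ∀ ⦃α β : L⦄, S α = some dot → β < α → S β = none) :
    SlideInvariant v S where
  ordConnected := hconn
  finite := hfin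
  lt_of_lt := hlt
  above_dot α β hα hαβ := by
    rcases h : S β with _ | (y | u)
    exacts [Or.inl rfl, Or.inr ⟨y, rfl, hge β y h⟩, absurd h (habove hα hαβ)]
  below_dot α β hα hβα := Or.inl (hbelow hα hβα)

/-- A value `v` lying strictly above a dot must cover it: a box in between would be filled
with a value that is both `≥ v` (being above the dot) and `< v` (being below `v`). -/
theorem covBy (I : SlideInvariant v S) {α β : L} (hα : S α = some dot) (hαβ : α < β)
    (hβ : S β = some (Sum.inl v)) : α ⋖ β := by
  have hαS : α ∈ shapeOf S := by simp [shapeOf, hα]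
  have hβS : β ∈ shapeOf S := by simp [shapeOf, hβ]
  have hIcc := I.ordConnected.out hαS hβS
  obtain ⟨γ, hαγ, hγβ⟩ := exists_covBy_le_of_lt_of_finite (I.finite.subset hIcc) hαβ
  rcases hγβ.eq_or_lt with rfl | hγβ
  · exact hαγ
  rcases I.above_dot hα hαγ.lt with h | ⟨y, hy, hvy⟩
  · exact absurd h (hIcc ⟨hαγ.le, hγβ.le⟩)
  · exact absurd (I.lt_of_lt hγβ hy hβ) hvy.not_gt

theorem swapVal_lt_of_lt (I : SlideInvariant v S) {α β : L} (hαβ : α < β) {x y : ℤ}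
    (hx : swapVal (Sum.inl v) dot S α = some (Sum.inl x))
    (hy : swapVal (Sum.inl v) dot S β = some (Sum.inl y)) : x < y := by
  rcases swapVal_eq_inl hx with ⟨hxS, -⟩ | ⟨rfl, hαS, -⟩ <;>
    rcases swapVal_eq_inl hy with ⟨hyS, hyβ⟩ | ⟨rfl, hβS, -⟩
  · exact I.lt_of_lt hαβ hxS hyS
  · rcases I.below_dot hβS hαβ with h | ⟨x', hx', hx'v⟩
    · simp [hxS] at h
    · rw [hxS, Option.some_inj, Sum.inl.injEq] at hx'; omega
  · rcases I.above_dot hαS hαβ with h | ⟨y', hy', hvy'⟩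
    · simp [hyS] at h
    rw [hyS, Option.some_inj, Sum.inl.injEq] at hy'
    subst hy'
    refine hvy'.lt_of_ne fun hxy => hyβ hxy.symm ⟨α, Or.inr ?_, hαS⟩
    exact I.covBy hαS hαβ (hxy ▸ hyS)
  · rcases I.above_dot hαS hαβ with h | ⟨y', h, -⟩ <;> simp [hβS] at h

theorem swapVal_above_dot (I : SlideInvariant v S) {α β : L}
    (hα : swapVal (Sum.inl v) dot S α = some dot) (hαβ : α < β) :
    swapVal (Sum.inl v) dot S β = none ∨
      ∃ y, swapVal (Sum.inl v) dot S β = some (Sum.inl y) ∧ v + 1 ≤ y := by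
  rcases swapVal_eq_some_right (by simp) hα with ⟨hαS, hnb⟩ | ⟨hαS, -⟩
  · rcases I.above_dot hαS hαβ with h | ⟨y, hy, hvy⟩
    · exact Or.inl (swapVal_eq_none_iff.mpr h)
    have hyv : y ≠ v := fun hyv => hnb ⟨β, Or.inl (I.covBy hαS hαβ (hyv ▸ hy)), hyv ▸ hy⟩
    exact Or.inr ⟨y, swapVal_apply_inl_of_ne hy hyv, by omega⟩
  · rcases h : S β with _ | (y | u)
    · exact Or.inl (swapVal_eq_none_iff.mpr h)
    · have hvy := I.lt_of_lt hαβ hαS h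
      exact Or.inr ⟨y, swapVal_apply_inl_of_ne h hvy.ne', hvy⟩
    · rcases I.below_dot h hαβ with h' | ⟨x, hx, hxv⟩ <;> simp_all

theorem swapVal_below_dot (I : SlideInvariant v S) {α β : L}
    (hα : swapVal (Sum.inl v) dot S α = some dot) (hβα : β < α) :
    swapVal (Sum.inl v) dot S β = none ∨
      ∃ y, swapVal (Sum.inl v) dot S β = some (Sum.inl y) ∧ y < v + 1 := by
  rcases swapVal_eq_some_right (by simp) hα with ⟨hαS, -⟩ | ⟨hαS, -⟩
  · rcases I.below_dot hαS hβα with h | ⟨x, hx, hxv⟩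
    · exact Or.inl (swapVal_eq_none_iff.mpr h)
    · exact Or.inr ⟨x, swapVal_apply_inl_of_ne hx hxv.ne, by omega⟩
  · rcases h : S β with _ | (x | u)
    · exact Or.inl (swapVal_eq_none_iff.mpr h)
    · have hxv := I.lt_of_lt hβα h hαS
      exact Or.inr ⟨x, swapVal_apply_inl_of_ne h hxv.ne, by omega⟩
    · have hcov := I.covBy h hβα hαS
      exact Or.inr ⟨v, swapVal_apply_right (by simp) h ⟨α, Or.inl hcov, hαS⟩, by omega⟩

protected theorem swapVal (I : SlideInvariant v S) :
    SlideInvariant (v + 1) (swapVal (Sum.inl v) dot S) where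
  ordConnected := by rw [shapeOf_swapVal]; exact I.ordConnected
  finite := by rw [shapeOf_swapVal]; exact I.finite
  lt_of_lt _ _ hαβ _ _ := I.swapVal_lt_of_lt hαβ
  above_dot _ _ := I.swapVal_above_dot
  below_dot _ _ := I.swapVal_below_dot

protected theorem swapUp (I : SlideInvariant v S) (n : ℕ) :
    SlideInvariant (v + n) (swapUp v n S) := by
  induction n with
  | zero => simpa [swapUp] using I
  | succ n ih => simpa [swapUp, add_assoc] using ih.swapVal

theorem swapVal_swapVal (I : SlideInvariant v S) :
    swapVal (Sum.inl v) dot (swapVal (Sum.inl v) dot S) = S := by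
  refine _root_.swapVal_swapVal (by simp) (fun α β hαβ hα hβ => ?_) fun α β hαβ hα hβ => ?_
  · rcases hαβ with h | h
    · exact (I.lt_of_lt h.lt hα hβ).false
    · exact (I.lt_of_lt h.lt hβ hα).false
  · rcases hαβ with h | h
    · rcases I.above_dot hα h.lt with h' | ⟨y, h', -⟩ <;> simp [hβ] at h'
    · rcases I.above_dot hβ h.lt with h' | ⟨y, h', -⟩ <;> simp [hα] at h'

theorem eq_none_of_dot_lt (I : SlideInvariant v S)
    (hv : ∀ α x, S α = some (Sum.inl x) → x < v) ⦃α β : L⦄ (hα : S α = some dot)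
    (hαβ : α < β) : S β = none := by
  rcases I.above_dot hα hαβ with h | ⟨y, hy, hvy⟩
  exacts [h, absurd (hv β y hy) hvy.not_gt]

end SlideInvariant

def forwardSlide (C : Finset L) (a b : ℤ) (T : L → Option ℤ) : L → Option ℤ :=
  restrictInt (swapUp a (b - a + 1).toNat (addDots C (toDotted T)))

theorem increasing_restrictInt {S : L → Option ZDot}
    (h : ∀ ⦃α β : L⦄, α < β → ∀ ⦃x y : ℤ⦄,
      S α = some (Sum.inl x) → S β = some (Sum.inl y) → x < y) :
    Increasing (restrictInt S) := fun _ _ hαβ _ _ hx hy =>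
  h hαβ (restrictInt_eq_some_iff.mp hx) (restrictInt_eq_some_iff.mp hy)

section Forward

variable {lam nu C : Finset L}

theorem ordConnected_sdiff_union_of_maximal (hpair : IsSkewPair lam nu)
    (hC : ∀ c ∈ C, c ∈ lam ∧ ∀ d ∈ lam, ¬c < d) :
    ((nu : Set L) \ lam ∪ C).OrdConnected := by
  refine ⟨fun x hx y hy z ⟨hxz, hzy⟩ => ?_⟩
  have hy_nu : y ∈ nu := by
    rcases hy with hy | hy
    exacts [hy.1, hpair.2.2 (hC y hy).1]
  by_cases hz : z ∈ lam
  · have hxC : x ∈ C := by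
      rcases hx with hx | hx
      exacts [absurd (hpair.1 z hz x hxz) hx.2, hx]
    rcases hxz.eq_or_lt with rfl | hxz
    exacts [Or.inr hxC, absurd hxz ((hC x hxC).2 z hz)]
  · exact Or.inl ⟨hpair.2.1 y hy_nu z hzy, hz⟩

theorem slideInvariant_addDots_of_maximal {T : L → Option ℤ} {a b : ℤ} (hpair : IsSkewPair lam nu)
    (hsh : shapeOf T = (nu : Set L) \ lam) (hT : Increasing T) (hval : ValuesIn T a b)
    (hC : ∀ c ∈ C, c ∈ lam ∧ ∀ d ∈ lam, ¬c < d) :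
    SlideInvariant a (addDots C (toDotted T)) := by
  have hshape : shapeOf (addDots C (toDotted T)) = (nu : Set L) \ lam ∪ C := by
    rw [shapeOf_addDots_toDotted, hsh]
  refine .of_eq_none_below_dot (hshape ▸ ordConnected_sdiff_union_of_maximal hpair hC)
    (hshape ▸ (nu.finite_toSet.sdiff.union C.finite_toSet))
    (fun α β hαβ x y hx hy => hT α β hαβ x y (addDots_toDotted_eq_inl_iff.mp hx).2
      (addDots_toDotted_eq_inl_iff.mp hy).2)
    (fun α x hx => (hval α x (addDots_toDotted_eq_inl_iff.mp hx).2).1)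
    (fun α β hα hαβ hβ => ?_) (fun α β hα hβα => ?_)
  · rw [addDots_toDotted_eq_dot_iff] at hα hβ
    exact (hC α hα).2 β (hC β hβ).1 hαβ
  · rw [addDots_toDotted_eq_dot_iff] at hα
    have hβ_lam : β ∈ lam := hpair.1 α (hC α hα).1 β hβα.le
    have hβC : β ∉ C := fun hβ => (hC β hβ).2 α (hC α hα).1 hβα
    have hTβ : β ∉ shapeOf T := by rw [hsh]; exact fun h => h.2 hβ_lam
    simpa [shapeOf, addDots, toDotted, hβC] using hTβ

theorem exists_isSkewPair_shapeOf_restrictInt {S : L → Option ZDot} (hpair : IsSkewPair lam nu)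
    (hC : ∀ c ∈ C, c ∈ lam ∧ ∀ d ∈ lam, ¬c < d) (hshape : shapeOf S = (nu : Set L) \ lam ∪ C)
    (habove : ∀ ⦃α β : L⦄, S α = some dot → α < β → S β = none) :
    ∃ nu' : Finset L, IsSkewPair (lam \ C) nu' ∧
      shapeOf (restrictInt S) = (nu' : Set L) \ ↑(lam \ C) := by
  obtain ⟨hlam, hnu, hsub⟩ := hpair
  have hmem : ∀ α, S α ≠ none ↔ (α ∈ nu ∧ α ∉ lam) ∨ α ∈ C := fun α =>
    Set.ext_iff.mp hshape α
  obtain ⟨D, hD⟩ := exists_finset_eq_dot (hshape ▸ nu.finite_toSet.sdiff.union C.finite_toSet)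
  refine ⟨nu \ D, ⟨fun x hx y hyx => ?_, fun x hx y hyx => ?_, ?_⟩, ?_⟩
  · rw [Finset.mem_sdiff] at hx ⊢
    refine ⟨hlam x hx.1 y hyx, fun hyC => ?_⟩
    rcases hyx.eq_or_lt with rfl | hyx
    exacts [hx.2 hyC, (hC y hyC).2 x hx.1 hyx]
  · rw [Finset.mem_sdiff] at hx ⊢
    refine ⟨hnu x hx.1 y hyx, fun hyD => ?_⟩
    rcases hyx.eq_or_lt with rfl | hyx
    · exact hx.2 hyD
    have hx_lam : x ∈ lam := by
      by_contra h
      exact (hmem x).mpr (Or.inl ⟨hx.1, h⟩) (habove ((hD y).mp hyD) hyx)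
    rcases (hmem y).mp (by simp [(hD y).mp hyD]) with h | h
    exacts [h.2 (hlam x hx_lam y hyx.le), (hC y h).2 x hx_lam hyx]
  · intro x hx
    rw [Finset.mem_sdiff] at hx ⊢
    refine ⟨hsub hx.1, fun hxD => ?_⟩
    rcases (hmem x).mp (by simp [(hD x).mp hxD]) with h | h
    exacts [h.2 hx.1, hx.2 h]
  · rw [shapeOf_restrictInt, hshape]
    ext α
    have := fun h => (hC α h).1
    have := @hsub α
    simp only [Set.mem_sdiff, Set.mem_union, Set.mem_ofPred_eq, Finset.coe_sdiff,
      Finset.mem_coe, ← hD]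
    tauto

theorem forwardSlide_spec {T : L → Option ℤ} {a b : ℤ} (hpair : IsSkewPair lam nu)
    (hsh : shapeOf T = (nu : Set L) \ lam) (hT : Increasing T) (hval : ValuesIn T a b)
    (hC : ∀ c ∈ C, c ∈ lam ∧ ∀ d ∈ lam, ¬c < d) :
    Increasing (forwardSlide C a b T) ∧ ∃ nu' : Finset L, IsSkewPair (lam \ C) nu' ∧
      shapeOf (forwardSlide C a b T) = (nu' : Set L) \ ↑(lam \ C) := by
  set n := (b - a + 1).toNat
  have I := (slideInvariant_addDots_of_maximal hpair hsh hT hval hC).swapUp n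
  have hlt : ∀ α x, swapUp a n (addDots C (toDotted T)) α = some (Sum.inl x) → x < a + n :=
    fun α x hx => by
      have := valuesIn_restrictInt_of_range_subset (range_swapUp_subset a n _)
        (valuesIn_restrictInt_addDots_toDotted hval) α x (restrictInt_eq_some_iff.mpr hx)
      omega
  refine ⟨increasing_restrictInt I.lt_of_lt,
    exists_isSkewPair_shapeOf_restrictInt hpair hC ?_ (I.eq_none_of_dot_lt hlt)⟩
  rw [shapeOf_swapUp, shapeOf_addDots_toDotted, hsh]

end Forward

section Reverse

variable {lam nu C : Finset L}

def reverseSlide (C : Finset L) (a b : ℤ) (T : L → Option ℤ) : L → Option ℤ :=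
  restrictInt (swapDown b (b - a + 1).toNat (addDots C (toDotted T)))

theorem mem_of_lt_of_mem_union_minimal (hnu : StraightShape nu)
    (hC : ∀ c ∈ C, c ∉ nu ∧ ∀ d : L, d ∉ nu → ¬d < c) {x y : L} (hx : x ∈ nu ∨ x ∈ C)
    (hyx : y < x) : y ∈ nu := by
  rcases hx with hx | hx
  · exact hnu x hx y hyx.le
  · by_contra hy
    exact (hC x hx).2 y hy hyx

theorem ordConnected_sdiff_union_of_minimal (hpair : IsSkewPair lam nu)
    (hC : ∀ c ∈ C, c ∉ nu ∧ ∀ d : L, d ∉ nu → ¬d < c) :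
    ((nu : Set L) \ lam ∪ C).OrdConnected := by
  refine ⟨fun x hx y hy z ⟨hxz, hzy⟩ => ?_⟩
  rcases hzy.eq_or_lt with rfl | hzy
  · exact hy
  refine Or.inl ⟨mem_of_lt_of_mem_union_minimal hpair.2.1 hC (hy.imp And.left id) hzy,
    fun hz => ?_⟩
  have hx_lam := hpair.1 z hz x hxz
  rcases hx with hx | hx
  exacts [hx.2 hx_lam, (hC x hx).1 (hpair.2.2 hx_lam)]

theorem slideInvariant_negDual_addDots_of_minimal {T : L → Option ℤ} {a b : ℤ}
    (hpair : IsSkewPair lam nu)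
    (hsh : shapeOf T = (nu : Set L) \ lam) (hT : Increasing T) (hval : ValuesIn T a b)
    (hC : ∀ c ∈ C, c ∉ nu ∧ ∀ d : L, d ∉ nu → ¬d < c) :
    SlideInvariant (-b) (negDual (addDots C (toDotted T))) := by
  have hshape : shapeOf (addDots C (toDotted T)) = (nu : Set L) \ lam ∪ C := by
    rw [shapeOf_addDots_toDotted, hsh]
  refine .of_eq_none_below_dot ?_ ?_ (fun α β hαβ x y hx hy => ?_) (fun α x hx => ?_)
    (fun α β hα hαβ hβ => ?_) (fun α β hα hβα => ?_)
  · rw [shapeOf_negDual, hshape]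
    exact (ordConnected_sdiff_union_of_minimal hpair hC).dual
  · rw [shapeOf_negDual, hshape]
    exact (nu.finite_toSet.sdiff.union C.finite_toSet).preimage ofDual.injective.injOn
  · simp only [negDual_eq_inl_iff, addDots_toDotted_eq_inl_iff] at hx hy
    have := hT _ _ (ofDual_lt_ofDual.mpr hαβ) _ _ hy.2 hx.2
    omega
  · simp only [negDual_eq_inl_iff, addDots_toDotted_eq_inl_iff] at hx
    have := hval _ _ hx.2
    omega
  · simp only [negDual_eq_dot_iff, addDots_toDotted_eq_dot_iff] at hα hβ
    exact (hC _ hα).2 _ (hC _ hβ).1 (ofDual_lt_ofDual.mpr hαβ)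
  · simp only [negDual_eq_dot_iff, addDots_toDotted_eq_dot_iff] at hα
    have hβα : ofDual α < ofDual β := ofDual_lt_ofDual.mpr hβα
    have hβ_nu : ofDual β ∉ nu := fun h => (hC _ hα).1 (hpair.2.1 _ h _ hβα.le)
    have hβC : ofDual β ∉ C := fun h => (hC _ h).2 _ (hC _ hα).1 hβα
    have hTβ : ofDual β ∉ shapeOf T := by rw [hsh]; exact fun h => hβ_nu h.1
    simpa [negDual, shapeOf, addDots, toDotted, hβC] using hTβ

theorem isSkewPair_union_of_minimal {S : L → Option ZDot} {D : Finset L}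
    (hpair : IsSkewPair lam nu) (hC : ∀ c ∈ C, c ∉ nu ∧ ∀ d : L, d ∉ nu → ¬d < c)
    (hshape : shapeOf S = (nu : Set L) \ lam ∪ C)
    (hbelow : ∀ ⦃α β : L⦄, S α = some dot → β < α → S β = none)
    (hD : ∀ α, α ∈ D ↔ S α = some dot) :
    IsSkewPair (lam ∪ D) (nu ∪ C) := by
  obtain ⟨hlam, hnu, hsub⟩ := hpair
  have hmem : ∀ α, S α ≠ none ↔ (α ∈ nu ∧ α ∉ lam) ∨ α ∈ C := fun α =>
    Set.ext_iff.mp hshape α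
  have hD_sub : ∀ α ∈ D, α ∈ nu ∨ α ∈ C := fun α h =>
    ((hmem α).mp (by simp [(hD α).mp h])).imp_left And.left
  refine ⟨fun x hx y hyx => ?_, fun x hx y hyx => ?_, ?_⟩
  · rw [Finset.mem_union] at hx ⊢
    rcases hx with hx | hx
    · exact Or.inl (hlam x hx y hyx)
    rcases hyx.eq_or_lt with rfl | hyx
    · exact Or.inr hx
    have hy_nu := mem_of_lt_of_mem_union_minimal hnu hC (hD_sub x hx) hyx
    by_contra h
    exact (hmem y).mpr (Or.inl ⟨hy_nu, fun h' => h (Or.inl h')⟩)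
      (hbelow ((hD x).mp hx) hyx)
  · rcases hyx.eq_or_lt with rfl | hyx
    · exact hx
    exact Finset.mem_union_left _
      (mem_of_lt_of_mem_union_minimal hnu hC (Finset.mem_union.mp hx) hyx)
  · exact Finset.union_subset (hsub.trans Finset.subset_union_left)
      fun α h => Finset.mem_union.mpr (hD_sub α h)

theorem isForwardSlide_restrictInt {S : L → Option ZDot} {T : L → Option ℤ} {a b : ℤ}
    (hpair : IsSkewPair lam nu) (hC : ∀ c ∈ C, c ∉ nu ∧ ∀ d : L, d ∉ nu → ¬d < c)
    (hshape : shapeOf S = (nu : Set L) \ lam ∪ C)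
    (hbelow : ∀ ⦃α β : L⦄, S α = some dot → β < α → S β = none)
    (hval : ValuesIn (restrictInt S) a b) (hT : restrictInt (swapUp a (b - a + 1).toNat S) = T) :
    IsForwardSlide (restrictInt S) T := by
  obtain ⟨D, hD⟩ := exists_finset_eq_dot (hshape ▸ nu.finite_toSet.sdiff.union C.finite_toSet)
  have hmem : ∀ α, S α ≠ none ↔ (α ∈ nu ∧ α ∉ lam) ∨ α ∈ C := fun α =>
    Set.ext_iff.mp hshape α
  refine ⟨lam ∪ D, nu ∪ C, D, a, b, isSkewPair_union_of_minimal hpair hC hshape hbelow hD, ?_,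
    hval, fun c hc => ⟨Finset.mem_union_right _ hc, fun d hd hcd => ?_⟩, ?_⟩
  · rw [shapeOf_restrictInt, hshape]
    ext α
    have := fun h => (hC α h).1
    have := @hpair.2.2 α
    simp only [Set.mem_sdiff, Set.mem_union, Set.mem_ofPred_eq, Finset.coe_union,
      Finset.mem_coe, ← hD]
    tauto
  · rcases Finset.mem_union.mp hd with hd | hd
    · have hc_lam := hpair.1 d hd c hcd.le
      rcases (hmem c).mp (by simp [(hD c).mp hc]) with h | h
      exacts [h.2 hc_lam, (hC c h).1 (hpair.2.2 hc_lam)]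
    · exact absurd ((hD c).mp hc) (by simp [hbelow ((hD d).mp hd) hcd])
  · rw [addDots_toDotted_restrictInt hD, hT]

theorem reverseSlide_spec {T : L → Option ℤ} {a b : ℤ} (hpair : IsSkewPair lam nu)
    (hsh : shapeOf T = (nu : Set L) \ lam) (hT : Increasing T) (hval : ValuesIn T a b)
    (hC : ∀ c ∈ C, c ∉ nu ∧ ∀ d : L, d ∉ nu → ¬d < c) :
    Increasing (reverseSlide C a b T) ∧ IsForwardSlide (reverseSlide C a b T) T := by
  set S₀ := addDots C (toDotted T)
  set n := (b - a + 1).toNat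
  have I : ∀ k : ℕ, SlideInvariant (-b + k) (negDual (swapDown b k S₀)) := fun k => by
    rw [negDual_swapDown]
    exact (slideInvariant_negDual_addDots_of_minimal hpair hsh hT hval hC).swapUp k
  have hinv : ∀ k : ℕ, swapVal (Sum.inl (b - k)) dot (swapDown b (k + 1) S₀) =
      swapDown b k S₀ := fun k => negDual_injective <| by
    rw [swapDown, negDual_swapVal, negDual_swapVal, neg_sub, sub_eq_neg_add]
    exact (I k).swapVal_swapVal
  have hundo : swapUp a n (swapDown b n S₀) = S₀ := by
    rcases Nat.eq_zero_or_pos n with hn | hn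
    · rw [hn]; rfl
    · exact swapUp_swapDown (by omega) fun k _ => hinv k
  have hval' : ValuesIn (restrictInt (swapDown b n S₀)) a b :=
    valuesIn_restrictInt_of_range_subset (range_swapDown_subset b n _)
      (valuesIn_restrictInt_addDots_toDotted hval)
  refine ⟨increasing_restrictInt fun α β hαβ x y hx hy => ?_,
    isForwardSlide_restrictInt hpair hC ?_ (fun α β hα hβα => ?_) hval' ?_⟩
  · have := (I n).lt_of_lt (toDual_lt_toDual.mpr hαβ) (x := -y) (y := -x)
      (by simpa using hy) (by simpa using hx)
    omega
  · rw [shapeOf_swapDown, shapeOf_addDots_toDotted, hsh]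
  · have hlt : ∀ γ x, negDual (swapDown b n S₀) γ = some (Sum.inl x) → x < -b + n :=
      fun γ x hx => by
        have := hval' _ _ (restrictInt_eq_some_iff.mpr (negDual_eq_inl_iff.mp hx))
        omega
    simpa using (I n).eq_none_of_dot_lt hlt (α := toDual α) (β := toDual β)
      (by simpa using hα) (toDual_lt_toDual.mpr hβα)
  · rw [hundo, restrictInt_addDots_toDotted fun c hc => ?_]
    have hc : c ∉ shapeOf T := by rw [hsh]; exact fun h => (hC c hc).1 h.1
    simpa [shapeOf] using hc

end Reverse

end Slides

section Rectification

variable [PartialOrder L] {T T' : L → Option ℤ}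

theorem IsForwardSlide.hasSkewShape (h : IsForwardSlide T T') : HasSkewShape T :=
  let ⟨lam, nu, _, _, _, hpair, hsh, _⟩ := h
  ⟨lam, nu, hpair, hsh⟩

theorem IsForwardSlide.increasingSkewTableau (h : IsForwardSlide T T') (hT : Increasing T) :
    IncreasingSkewTableau T' := by
  obtain ⟨lam, nu, C, a, b, hpair, hsh, hval, hC, rfl⟩ := h
  obtain ⟨hinc, nu', hpair', hsh'⟩ := forwardSlide_spec hpair hsh hT hval hC
  exact ⟨⟨_, nu', hpair', hsh'⟩, hinc⟩

theorem IsReverseSlide.isForwardSlide (h : IsReverseSlide T T') (hT : Increasing T) :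
    Increasing T' ∧ IsForwardSlide T' T := by
  obtain ⟨lam, nu, C, a, b, hpair, hsh, hval, hC, rfl⟩ := h
  exact reverseSlide_spec hpair hsh hT hval hC

theorem HasStraightShape.hasSkewShape (h : HasStraightShape T) : HasSkewShape T := by
  obtain ⟨nu, hnu, hsh⟩ := h
  exact ⟨∅, nu, ⟨fun _ h => absurd h (Finset.notMem_empty _), hnu, Finset.empty_subset _⟩,
    by simpa using hsh⟩

theorem exists_rectifiesTo (hT : IncreasingSkewTableau T) : ∃ U, RectifiesTo T U := by
  obtain ⟨⟨lam, nu, hpair, hsh⟩, hinc⟩ := hT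
  induction h : lam.card using Nat.strong_induction_on generalizing T lam nu with
  | _ n ih =>
    rcases lam.eq_empty_or_nonempty with rfl | hne
    · exact ⟨T, .refl, nu, hpair.2.1, by simpa using hsh⟩
    set C := lam.filter fun c => ∀ d ∈ lam, ¬c < d
    have hC : ∀ c ∈ C, c ∈ lam ∧ ∀ d ∈ lam, ¬c < d := fun c hc => Finset.mem_filter.mp hc
    have hCne : C.Nonempty := by
      obtain ⟨m, hm⟩ := lam.exists_maximal hne
      exact ⟨m, Finset.mem_filter.mpr ⟨hm.prop, fun d hd => hm.not_gt hd⟩⟩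
    obtain ⟨a, b, hval⟩ := exists_valuesIn (nu := nu) (hsh ▸ Set.sdiff_subset)
    obtain ⟨hinc', nu', hpair', hsh'⟩ := forwardSlide_spec hpair hsh hinc hval hC
    obtain ⟨U, hTU, hU⟩ := ih _ (h ▸ Finset.card_lt_card (Finset.sdiff_ssubset
      (Finset.filter_subset _ _) hCne)) hinc' _ _ hpair' hsh' rfl
    exact ⟨U, .head ⟨lam, nu, C, a, b, hpair, hsh, hval, hC, rfl⟩ hTU, hU⟩

theorem IsURT.rectifiesTo_of_jdtEquiv {U : L → Option ℤ} (hU : IsURT U) (h : JdtEquiv U T) :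
    IncreasingSkewTableau T ∧ RectifiesTo T U := by
  induction h with
  | refl => exact ⟨⟨hU.1.hasSkewShape, hU.2.1⟩, .refl, hU.1⟩
  | @tail Y Z _ hYZ ih =>
    obtain ⟨hY, hYU⟩ := ih
    rcases hYZ with hfwd | hrev
    · have hZ := hfwd.increasingSkewTableau hY.2
      obtain ⟨V, hZV⟩ := exists_rectifiesTo hZ
      have hVU : V = U := hU.2.2 Y hY hYU V ⟨.head hfwd hZV.1, hZV.2⟩
      exact ⟨hZ, hVU ▸ hZV⟩
    · obtain ⟨hZinc, hZY⟩ := hrev.isForwardSlide hY.2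
      exact ⟨⟨hZY.hasSkewShape, hZinc⟩, .head hZY hYU.1, hU.1⟩

end Rectification

end Development

theorem urt_unique_straight_in_class_general {L : Type} [PartialOrder L]
    (U : L → Option ℤ) (hU : IsURT U) :
    ∀ T : L → Option ℤ, Increasing T → HasStraightShape T → JdtEquiv U T → T = U := by
  intro T _ hTstraight hUT
  obtain ⟨hTskew, hTU⟩ := hU.rectifiesTo_of_jdtEquiv hUT
  exact hU.2.2 T hTskew hTU T ⟨.refl, hTstraight⟩

theorem urt_unique_straight_in_class {L : Type} [PartialOrder L]
    (hmin : {x : L | ∀ y : L, ¬ y < x}.Finite)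
    (hcov : ∀ x : L, {y : L | x ⋖ y}.Finite)
    (U : L → Option ℤ) (hU : IsURT U) :
    ∀ T : L → Option ℤ, Increasing T → HasStraightShape T → JdtEquiv U T → T = U :=
  urt_unique_straight_in_class_general U hU
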